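/- arXiv:2107.08285 — 6 statements merged into one kernel-verified Lean document; each statement's English description precedes it below -/
import Mathlib

section
/- For a finite action set A, Q : A → ℝ, and a probability distribution π on A with full support, the scaled reverse KL satisfies lim_{τ→0⁺} τ·KL(π ‖ B_τQ) = −∑_a π(a)Q(a) + max_a Q(a), where B_τQ(a) = exp(Q(a)/τ)/∑_b exp(Q(b)/τ). -/
open Finset Filter

noncomputable def boltzmann {A : Type*} [Fintype A] (Q : A → ℝ) (τ : ℝ) (a : A) : ℝ :=
  Real.exp (Q a / τ) / ∑ b, Real.exp (Q b / τ)

/-!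
Since `log B_τQ(a) = Q(a)/τ - log Z_τ` with `Z_τ = ∑_b exp(Q(b)/τ)`, the scaled divergence splits as
`τ·∑ π log π - ∑ π Q + τ log Z_τ`. The first term vanishes as `τ → 0⁺`, and
`exp(M/τ) ≤ Z_τ ≤ |A| exp(M/τ)` with `M = max Q` squeezes `τ log Z_τ` between `M` and `M + τ log |A|`.
-/

namespace Real

theorem mul_log_div_eq_mul_log_sub_mul_log (x : ℝ) {y : ℝ} (hy : y ≠ 0) :
    x * log (x / y) = x * log x - x * log y := by
  rcases eq_or_ne x 0 with rfl | hx
  · simp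
  · rw [log_div hx hy, mul_sub]

section LogSumExp

variable {ι : Type*} [Fintype ι] [Nonempty ι] (f : ι → ℝ)

theorem sup'_le_mul_log_sum_exp_div {τ : ℝ} (hτ : 0 < τ) :
    univ.sup' univ_nonempty f ≤ τ * log (∑ i, exp (f i / τ)) := by
  obtain ⟨i, -, hi⟩ := exists_mem_eq_sup' univ_nonempty f
  have hlog : f i / τ ≤ log (∑ j, exp (f j / τ)) := by
    rw [← log_exp (f i / τ)]
    exact log_le_log (exp_pos _)
      (single_le_sum (f := fun j => exp (f j / τ)) (fun j _ => (exp_pos _).le) (mem_univ i))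
  rw [hi, ← div_le_iff₀' hτ]
  exact hlog

theorem mul_log_sum_exp_div_le {τ : ℝ} (hτ : 0 < τ) :
    τ * log (∑ i, exp (f i / τ)) ≤ univ.sup' univ_nonempty f + τ * log (Fintype.card ι) := by
  set M := univ.sup' univ_nonempty f
  have hsum : ∑ i, exp (f i / τ) ≤ Fintype.card ι * exp (M / τ) :=
    calc ∑ i, exp (f i / τ) ≤ ∑ _i : ι, exp (M / τ) := sum_le_sum fun i _ =>
          exp_le_exp.2 (div_le_div_of_nonneg_right (le_sup' f (mem_univ i)) hτ.le)
      _ = Fintype.card ι * exp (M / τ) := by simp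
  have hlog : log (∑ i, exp (f i / τ)) ≤ log (Fintype.card ι) + M / τ :=
    calc log (∑ i, exp (f i / τ)) ≤ log (Fintype.card ι * exp (M / τ)) :=
          log_le_log (sum_pos (fun i _ => exp_pos _) univ_nonempty) hsum
      _ = log (Fintype.card ι) + M / τ := by
          rw [log_mul (by exact_mod_cast Fintype.card_ne_zero) (exp_ne_zero _), log_exp]
  calc τ * log (∑ i, exp (f i / τ)) ≤ τ * (log (Fintype.card ι) + M / τ) :=
        mul_le_mul_of_nonneg_left hlog hτ.le
    _ = M + τ * log (Fintype.card ι) := by field_simp; ring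

theorem tendsto_mul_log_sum_exp_div :
    Tendsto (fun τ => τ * log (∑ i, exp (f i / τ))) (nhdsWithin 0 (Set.Ioi 0))
      (nhds (univ.sup' univ_nonempty f)) := by
  have hupper : Tendsto (fun τ : ℝ => univ.sup' univ_nonempty f + τ * log (Fintype.card ι))
      (nhdsWithin 0 (Set.Ioi 0)) (nhds (univ.sup' univ_nonempty f)) := by
    have hcont : Continuous fun τ : ℝ => univ.sup' univ_nonempty f + τ * log (Fintype.card ι) := by
      fun_prop
    simpa using (hcont.tendsto 0).mono_left nhdsWithin_le_nhds
  refine tendsto_of_tendsto_of_tendsto_of_le_of_le' tendsto_const_nhds hupper ?_ ?_ <;>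
    filter_upwards [self_mem_nhdsWithin] with τ hτ
  exacts [sup'_le_mul_log_sum_exp_div f hτ, mul_log_sum_exp_div_le f hτ]

end LogSumExp

end Real

theorem log_boltzmann {A : Type*} [Fintype A] [Nonempty A] (Q : A → ℝ) (τ : ℝ) (a : A) :
    Real.log (boltzmann Q τ a) = Q a / τ - Real.log (∑ b, Real.exp (Q b / τ)) := by
  rw [boltzmann, Real.log_div (Real.exp_ne_zero _)
    (sum_pos (fun b _ => Real.exp_pos _) univ_nonempty).ne', Real.log_exp]

theorem mul_sum_mul_log_div_boltzmann {A : Type*} [Fintype A] [Nonempty A] (Q p : A → ℝ)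
    {τ : ℝ} (hτ : τ ≠ 0) :
    τ * ∑ a, p a * Real.log (p a / boltzmann Q τ a) =
      τ * ∑ a, p a * Real.log (p a) - ∑ a, p a * Q a +
        (∑ a, p a) * (τ * Real.log (∑ b, Real.exp (Q b / τ))) := by
  have hB : ∀ a, boltzmann Q τ a ≠ 0 := fun a =>
    (div_pos (Real.exp_pos _) (sum_pos (fun b _ => Real.exp_pos _) univ_nonempty)).ne'
  simp only [Real.mul_log_div_eq_mul_log_sub_mul_log _ (hB _), log_boltzmann, mul_sum, sum_mul,
    ← sum_sub_distrib, ← sum_add_distrib]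
  refine sum_congr rfl fun a _ => ?_
  field_simp
  ring

theorem tau_rkl_limit_general {A : Type*} [Fintype A] [Nonempty A] (Q : A → ℝ)
    (π : A → ℝ) (hπ1 : ∑ a, π a = 1) :
    Tendsto (fun τ : ℝ => τ * ∑ a, π a * Real.log (π a / boltzmann Q τ a))
      (nhdsWithin 0 (Set.Ioi 0))
      (nhds (-(∑ a, π a * Q a) + Finset.univ.sup' Finset.univ_nonempty Q)) := by
  have hentropy : Tendsto (fun τ : ℝ => τ * ∑ a, π a * Real.log (π a)) (nhdsWithin 0 (Set.Ioi 0))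
      (nhds 0) := by
    simpa using (tendsto_nhdsWithin_of_tendsto_nhds (tendsto_id (x := nhds (0 : ℝ)))).mul_const
      (∑ a, π a * Real.log (π a))
  have hlimit := (hentropy.sub_const (∑ a, π a * Q a)).add
    ((Real.tendsto_mul_log_sum_exp_div Q).const_mul (∑ a, π a))
  rw [hπ1, zero_sub, one_mul] at hlimit
  refine hlimit.congr' ?_
  filter_upwards [self_mem_nhdsWithin] with τ hτ
  rw [mul_sum_mul_log_div_boltzmann Q π hτ.ne', hπ1, one_mul]

/-- The scaled reverse KL to the Boltzmann distribution satisfies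
`lim_{τ→0⁺} τ·KL(π ‖ B_τQ) = −∑ₐ π(a) Q(a) + maxₐ Q(a)`. -/
theorem tau_rkl_limit {A : Type*} [Fintype A] [Nonempty A] (Q : A → ℝ)
    (π : A → ℝ) (hπ : ∀ a, 0 < π a) (hπ1 : ∑ a, π a = 1) :
    Tendsto (fun τ : ℝ => τ * ∑ a, π a * Real.log (π a / boltzmann Q τ a))
      (nhdsWithin 0 (Set.Ioi 0))
      (nhds (-(∑ a, π a * Q a) + Finset.univ.sup' Finset.univ_nonempty Q)) :=
  tau_rkl_limit_general Q π hπ1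
end

section
/- Soft performance difference lemma: for any two policies π_new, π_old on a finite MDP with discount γ ∈ [0,1) and entropy temperature τ ≥ 0, η_τ(π_new) − η_τ(π_old) = (1/(1−γ)) · E_{S∼d^{π_new}}[ E_{A∼π_new(·|S)}[A_τ^{π_old}(S,A)] − τ·KL(π_new(·|S) ‖ π_old(·|S)) ]. -/
open Finset

/-- Soft performance difference lemma: in a finite entropy-regularized MDP,
`η_τ(π_new) − η_τ(π_old) = (1/(1−γ)) E_{S∼d^{π_new}}[E_{A∼π_new}[A_τ^{π_old}(S,A)]
 − τ·KL(π_new(·|S) ‖ π_old(·|S))]`.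
The soft value functions are characterized by their Bellman equations, and
`d` is the normalized discounted visitation distribution of `π_new`. -/
theorem soft_performance_difference
    {S A : Type*} [Fintype S] [Fintype A] [Nonempty S] [Nonempty A]
    (P : S → A → S → ℝ) (hP0 : ∀ s a s', 0 ≤ P s a s') (hP1 : ∀ s a, ∑ s', P s a s' = 1)
    (r : S → A → ℝ) (γ : ℝ) (hγ0 : 0 ≤ γ) (hγ1 : γ < 1)
    (ρ : S → ℝ) (hρ0 : ∀ s, 0 ≤ ρ s) (hρ1 : ∑ s, ρ s = 1)
    (τ : ℝ) (hτ : 0 ≤ τ)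
    (πold πnew : S → A → ℝ)
    (hπold : ∀ s a, 0 < πold s a) (hπold1 : ∀ s, ∑ a, πold s a = 1)
    (hπnew : ∀ s a, 0 < πnew s a) (hπnew1 : ∀ s, ∑ a, πnew s a = 1)
    -- soft value functions of the old policy
    (Vold : S → ℝ) (Qold : S → A → ℝ)
    (hQold : ∀ s a, Qold s a = r s a + γ * ∑ s', P s a s' * Vold s')
    (hVold : ∀ s, Vold s = ∑ a, πold s a * (Qold s a - τ * Real.log (πold s a)))
    -- soft value function of the new policy
    (Vnew : S → ℝ)
    (hVnew : ∀ s, Vnew s = ∑ a, πnew s a *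
      (r s a + γ * (∑ s', P s a s' * Vnew s') - τ * Real.log (πnew s a)))
    -- normalized discounted state visitation distribution of the new policy
    (d : S → ℝ)
    (hd : ∀ s, d s = (1 - γ) * ρ s + γ * ∑ s', ∑ a, d s' * (πnew s' a * P s' a s)) :
    (∑ s, ρ s * Vnew s) - (∑ s, ρ s * Vold s) =
      (1 / (1 - γ)) * ∑ s, d s *
        ((∑ a, πnew s a * (Qold s a - τ * Real.log (πold s a) - Vold s))
          - τ * ∑ a, πnew s a * Real.log (πnew s a / πold s a)) := by
  have hγne : (1 : ℝ) - γ ≠ 0 := by linarith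
  set Δ : S → ℝ := fun s => Vnew s - Vold s with hΔ
  -- Step 1: pointwise identity for the bracket
  have key : ∀ s, ((∑ a, πnew s a * (Qold s a - τ * Real.log (πold s a) - Vold s))
          - τ * ∑ a, πnew s a * Real.log (πnew s a / πold s a))
      = Δ s - γ * ∑ a, πnew s a * ∑ s', P s a s' * Δ s' := by
    intro s
    have expand : ((∑ a, πnew s a * (Qold s a - τ * Real.log (πold s a) - Vold s))
          - τ * ∑ a, πnew s a * Real.log (πnew s a / πold s a))
        = ∑ a, (πnew s a * (r s a + γ * (∑ s', P s a s' * Vnew s') - τ * Real.log (πnew s a))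
            - πnew s a * Vold s - γ * (πnew s a * ∑ s', P s a s' * Δ s')) := by
      rw [Finset.mul_sum, ← Finset.sum_sub_distrib]
      apply Finset.sum_congr rfl
      intro a _
      rw [Real.log_div (hπnew s a).ne' (hπold s a).ne', hQold s a]
      have h2 : ∑ s', P s a s' * Δ s' = (∑ s', P s a s' * Vnew s') - ∑ s', P s a s' * Vold s' := by
        rw [← Finset.sum_sub_distrib]
        exact Finset.sum_congr rfl (fun s' _ => by simp [hΔ, mul_sub])
      rw [h2]; ring
    rw [expand, Finset.sum_sub_distrib, Finset.sum_sub_distrib, ← hVnew s,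
      ← Finset.sum_mul, hπnew1 s, one_mul, ← Finset.mul_sum]
  -- Step 2: summing against d
  have swap : ∑ s, d s * ∑ a, πnew s a * ∑ s', P s a s' * Δ s'
      = ∑ t, (∑ s', ∑ a, d s' * (πnew s' a * P s' a t)) * Δ t := by
    simp_rw [Finset.mul_sum, Finset.sum_mul]
    have step1 : ∀ s : S, ∑ a, ∑ s', d s * (πnew s a * (P s a s' * Δ s'))
        = ∑ s', ∑ a, d s * (πnew s a * (P s a s' * Δ s')) := fun s => Finset.sum_comm
    rw [Finset.sum_congr rfl (fun s _ => step1 s), Finset.sum_comm]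
    apply Finset.sum_congr rfl
    intro t _
    apply Finset.sum_congr rfl
    intro s' _
    apply Finset.sum_congr rfl
    intro s _
    ring
  have sum_eq : ∑ s, d s * (Δ s - γ * ∑ a, πnew s a * ∑ s', P s a s' * Δ s')
      = (1 - γ) * ∑ s, ρ s * Δ s := by
    have hdsum : ∑ s, d s * Δ s
        = (1 - γ) * ∑ s, ρ s * Δ s
          + γ * ∑ s, d s * ∑ a, πnew s a * ∑ s', P s a s' * Δ s' := by
      rw [swap]
      calc ∑ s, d s * Δ s
          = ∑ s, ((1 - γ) * ρ s + γ * ∑ s', ∑ a, d s' * (πnew s' a * P s' a s)) * Δ s :=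
            Finset.sum_congr rfl (fun s _ => by rw [← hd s])
        _ = (1 - γ) * ∑ s, ρ s * Δ s
            + γ * ∑ t, (∑ s', ∑ a, d s' * (πnew s' a * P s' a t)) * Δ t := by
            rw [Finset.mul_sum, Finset.mul_sum, ← Finset.sum_add_distrib]
            exact Finset.sum_congr rfl (fun s _ => by ring)
    calc ∑ s, d s * (Δ s - γ * ∑ a, πnew s a * ∑ s', P s a s' * Δ s')
        = ∑ s, d s * Δ s - γ * ∑ s, d s * ∑ a, πnew s a * ∑ s', P s a s' * Δ s' := by
          rw [Finset.mul_sum, ← Finset.sum_sub_distrib]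
          exact Finset.sum_congr rfl (fun s _ => by ring)
      _ = (1 - γ) * ∑ s, ρ s * Δ s := by rw [hdsum]; ring
  -- Conclusion
  have lhs_eq : (∑ s, ρ s * Vnew s) - (∑ s, ρ s * Vold s) = ∑ s, ρ s * Δ s := by
    rw [← Finset.sum_sub_distrib]
    exact Finset.sum_congr rfl (fun s _ => by simp [hΔ, mul_sub])
  rw [lhs_eq]
  have rhs_eq : ∑ s, d s *
        ((∑ a, πnew s a * (Qold s a - τ * Real.log (πold s a) - Vold s))
          - τ * ∑ a, πnew s a * Real.log (πnew s a / πold s a))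
      = (1 - γ) * ∑ s, ρ s * Δ s := by
    rw [← sum_eq]
    exact Finset.sum_congr rfl (fun s _ => by rw [key s])
  rw [rhs_eq]
  field_simp
end

section
/- FKL counterexample: in the single-state MDP with two actions a₁, a₂ whose rewards are r(a₁) = −1 and r(a₂) = 1 and deterministic self-transition, for any τ ≥ 0 and discount γ ∈ [0,1), there exist policies π_old (placing probability ε₁ on a₁) and π_new (placing probability 1−ε₂ on a₁) such that FKL(π_new ‖ B_τQ_τ^{π_old}) < FKL(π_old ‖ B_τQ_τ^{π_old}) yet η_τ(π_new) < η_τ(π_old). -/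
/-! The Boltzmann target `B_τ Q_τ^π` does not depend on `π`, because `γ V_τ^π` shifts both soft
action values by the same amount; it keeps a fixed weight `B2₀ τ ∈ (0, 1)` on `a₁`. Hence
`FKL(π_old ‖ B)` tends to infinity as `π_old(a₁) = ε₁ → 0`, while `FKL(π_new ‖ B)` is a constant
once `ε₂` is fixed. Meanwhile `V_τ` is continuous in the probability of `a₂`, with
`V_τ(0) = -1/(1-γ) < 0 < 1/(1-γ) = V_τ(1)`, so small `ε₂` and then small `ε₁` also make the value
drop. -/

open Finset

/-- Entropy of a Bernoulli distribution with success probability `p`. -/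
noncomputable def H2 (p : ℝ) : ℝ := -(p * Real.log p) - (1 - p) * Real.log (1 - p)

/-- Soft value of the single-state two-action MDP for a policy putting
probability `p` on the good action `a₂` (rewards `r(a₁) = −1`, `r(a₂) = 1`). -/
noncomputable def V2 (τ γ p : ℝ) : ℝ := ((2 * p - 1) + τ * H2 p) / (1 - γ)

/-- Soft action-values: `Q_τ^π(aᵢ) = r(aᵢ) + γ V_τ^π`. Index `0` is `a₁`. -/
noncomputable def Q2 (τ γ p : ℝ) (i : Fin 2) : ℝ :=
  (if i = 0 then (-1 : ℝ) else 1) + γ * V2 τ γ p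

/-- Boltzmann distribution over the soft action-values. -/
noncomputable def B2 (τ γ p : ℝ) (i : Fin 2) : ℝ :=
  Real.exp (Q2 τ γ p i / τ) / ∑ j, Real.exp (Q2 τ γ p j / τ)

/-- Forward KL of a policy `π` to the Boltzmann target of the policy with
probability `p` on `a₂`: `FKL(π‖B) = ∑ᵢ B(i) log(B(i)/π(i))`. -/
noncomputable def FKL2 (τ γ p : ℝ) (π : Fin 2 → ℝ) : ℝ :=
  ∑ i, B2 τ γ p i * Real.log (B2 τ γ p i / π i)

open Real Filter Topology

lemma H2_eq_binEntropy : H2 = binEntropy := by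
  ext p
  simp only [H2, binEntropy, log_inv]
  ring

lemma continuous_H2 : Continuous H2 :=
  H2_eq_binEntropy ▸ binEntropy_continuous

section SoftValue

variable (τ : ℝ) {γ : ℝ}

lemma continuous_V2 : Continuous (V2 τ γ) := by
  unfold V2
  have := continuous_H2
  fun_prop

lemma V2_zero : V2 τ γ 0 = -(1 - γ)⁻¹ := by
  simp [V2, H2, neg_div]

lemma V2_one : V2 τ γ 1 = (1 - γ)⁻¹ := by
  norm_num [V2, H2]

lemma eventually_V2_neg (hγ : γ < 1) : ∀ᶠ ε in 𝓝 0, V2 τ γ ε < 0 :=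
  (continuous_V2 τ).continuousAt.eventually_lt continuousAt_const
    (by simpa [V2_zero] using hγ)

lemma eventually_V2_one_sub_pos (hγ : γ < 1) : ∀ᶠ ε in 𝓝 0, 0 < V2 τ γ (1 - ε) := by
  have hcont : ContinuousAt (fun ε => V2 τ γ (1 - ε)) 0 := by
    have := continuous_V2 τ (γ := γ)
    fun_prop
  exact continuousAt_const.eventually_lt hcont (by simpa [V2_one] using hγ)

end SoftValue

noncomputable def B2₀ (τ : ℝ) : ℝ := (1 + exp (2 / τ))⁻¹

lemma B2₀_pos (τ : ℝ) : 0 < B2₀ τ := by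
  unfold B2₀
  positivity

lemma B2₀_lt_one (τ : ℝ) : B2₀ τ < 1 :=
  inv_lt_one_of_one_lt₀ (lt_add_of_pos_right 1 (exp_pos _))

section Boltzmann

variable (τ γ p : ℝ)

lemma B2_zero : B2 τ γ p 0 = B2₀ τ := by
  have hshift : Q2 τ γ p 1 / τ = Q2 τ γ p 0 / τ + 2 / τ := by
    simp only [Q2, Fin.one_eq_zero_iff, OfNat.ofNat_ne_one, if_true, if_false]
    ring
  rw [B2, B2₀, Fin.sum_univ_two, hshift, exp_add, ← mul_one_add,
    div_mul_cancel_left₀ (exp_pos _).ne']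

lemma B2_one : B2 τ γ p 1 = 1 - B2₀ τ := by
  have hsum : ∑ i, B2 τ γ p i = 1 := by
    simp only [B2, ← Finset.sum_div]
    exact div_self (Finset.sum_pos (fun j _ => exp_pos _) Finset.univ_nonempty).ne'
  rw [Fin.sum_univ_two, B2_zero] at hsum
  linarith

lemma FKL2_eq (μ : Fin 2 → ℝ) :
    FKL2 τ γ p μ = B2₀ τ * log (B2₀ τ / μ 0) + (1 - B2₀ τ) * log ((1 - B2₀ τ) / μ 1) := by
  rw [FKL2, Fin.sum_univ_two, B2_zero, B2_one]

end Boltzmann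

lemma tendsto_FKL2_nhdsGT_zero (τ γ : ℝ) :
    Tendsto (fun ε => FKL2 τ γ (1 - ε) ![ε, 1 - ε]) (𝓝[>] 0) atTop := by
  simp only [FKL2_eq, Matrix.cons_val_zero, Matrix.cons_val_one, Matrix.cons_val_fin_one]
  have hfirst : Tendsto (fun ε => B2₀ τ * log (B2₀ τ / ε)) (𝓝[>] 0) atTop := by
    refine Tendsto.const_mul_atTop (B2₀_pos τ) (tendsto_log_atTop.comp ?_)
    exact (tendsto_inv_nhdsGT_zero.const_mul_atTop (B2₀_pos τ)).congr fun ε =>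
      (div_eq_mul_inv _ ε).symm
  have hsecond : ContinuousAt (fun ε => (1 - B2₀ τ) * log ((1 - B2₀ τ) / (1 - ε))) 0 := by
    have h := (sub_pos.mpr (B2₀_lt_one τ)).ne'
    fun_prop (disch := simp [h])
  exact hfirst.atTop_add (hsecond.tendsto.mono_left nhdsWithin_le_nhds)

theorem fkl_counterexample_general (τ γ : ℝ) (hγ1 : γ < 1) :
    ∃ ε₁ ε₂ : ℝ, 0 < ε₁ ∧ ε₁ < 1 ∧ 0 < ε₂ ∧ ε₂ < 1 ∧
      FKL2 τ γ (1 - ε₁) ![1 - ε₂, ε₂] < FKL2 τ γ (1 - ε₁) ![ε₁, 1 - ε₁] ∧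
      V2 τ γ ε₂ < V2 τ γ (1 - ε₁) := by
  have hsmall : ∀ᶠ ε in 𝓝[>] (0 : ℝ), 0 < ε ∧ ε < 1 := Ioo_mem_nhdsGT zero_lt_one
  obtain ⟨ε₂, hV₂, hε₂0, hε₂1⟩ :=
    (((eventually_V2_neg τ hγ1).filter_mono nhdsWithin_le_nhds).and hsmall).exists
  obtain ⟨ε₁, hV₁, hFKL, hε₁0, hε₁1⟩ :=
    (((eventually_V2_one_sub_pos τ hγ1).filter_mono nhdsWithin_le_nhds).and <|
      ((tendsto_FKL2_nhdsGT_zero τ γ).eventually_gt_atTop (FKL2 τ γ 0 ![1 - ε₂, ε₂])).and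
        hsmall).exists
  refine ⟨ε₁, ε₂, hε₁0, hε₁1, hε₂0, hε₂1, ?_, hV₂.trans hV₁⟩
  rwa [FKL2_eq, ← FKL2_eq τ γ 0]

/-- FKL counterexample: in the single-state MDP with rewards `r(a₁)=−1`, `r(a₂)=1`,
for any `τ ≥ 0` and `γ ∈ [0,1)` there exist `π_old = (ε₁, 1−ε₁)` and
`π_new = (1−ε₂, ε₂)` such that the forward KL to `B_τ Q_τ^{π_old}` strictly
decreases while the soft value strictly decreases. -/
theorem fkl_counterexample (τ γ : ℝ) (hτ : 0 ≤ τ) (hγ0 : 0 ≤ γ) (hγ1 : γ < 1) :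
    ∃ ε₁ ε₂ : ℝ, 0 < ε₁ ∧ ε₁ < 1 ∧ 0 < ε₂ ∧ ε₂ < 1 ∧
      FKL2 τ γ (1 - ε₁) ![1 - ε₂, ε₂] < FKL2 τ γ (1 - ε₁) ![ε₁, 1 - ε₁] ∧
      V2 τ γ ε₂ < V2 τ γ (1 - ε₁) :=
  fkl_counterexample_general τ γ hγ1
end

section
/- Lower bound for improvement under d^{π_old}: if KL(π_new(·|s) ‖ π_old(·|s)) ≤ α for every state s, then η_τ(π_new) − η_τ(π_old) ≥ (1/(1−γ))·E_{S∼d^{π_old}}[ ∑_a π_new(a|S) A_τ^{π_old}(S,a) − τ·KL(π_new‖π_old)(S) − 4√2 · V_{τ,max} · √α ], where V_{τ,max} = (r_max + τ log|A|)/(1−γ). -/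
/-!
Put `Δ = V_new - V_old` and let `M` be the state transition matrix of `π_old`. The visitation
equation for `d` turns `(1 - γ) ρ ⬝ Δ` into `d ⬝ (Δ - γ M Δ)`, and `d ≥ 0`. At each state, expanding
the soft Bellman equation of `π_new` around `Q_old` gives
`Δ - γ M Δ = ∑ₐ π_new A_old - τ KL + ∑ₐ (π_new - π_old) (Q_new - Q_old)`,
where `Q_new - Q_old = γ P Δ` is at most `2 V_max` in absolute value. Hölder and Pinsker bound the
last sum by `2 V_max √(2α)`; Pinsker itself follows by Cauchy–Schwarz from the pointwise bound
`t log t - t + 1 ≥ 3 (t - 1)² / (2 (t + 2))`, a first-derivative test.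
-/

open Finset Real Set

noncomputable def pinskerGap (t : ℝ) : ℝ := t * log t - t + 1 - 3 / 2 * ((t - 1) ^ 2 / (t + 2))

noncomputable def pinskerGapDeriv (t : ℝ) : ℝ := log t - 3 / 2 * ((t - 1) * (t + 5) / (t + 2) ^ 2)

theorem le_of_hasDerivAt_of_sign {f f' : ℝ → ℝ} {a c x : ℝ}
    (hf : ∀ y, a < y → HasDerivAt f (f' y) y) (hle : ∀ y, a < y → y < c → f' y ≤ 0)
    (hge : ∀ y, c < y → 0 ≤ f' y) (hac : a < c) (hx : a < x) : f c ≤ f x := by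
  have hcont : ContinuousOn f (Ioi a) := fun y hy => (hf y hy).continuousAt.continuousWithinAt
  rcases le_total c x with hcx | hxc
  · refine monotoneOn_of_hasDerivWithinAt_nonneg (f' := f') (convex_Ici c)
      (hcont.mono fun y hy => hac.trans_le hy) (fun y hy => ?_) (fun y hy => ?_)
      self_mem_Ici hcx hcx
    all_goals rw [interior_Ici] at hy
    · exact (hf y (hac.trans hy)).hasDerivWithinAt
    · exact hge y hy
  · refine antitoneOn_of_hasDerivWithinAt_nonpos (f' := f') (convex_Ioc a c)
      (hcont.mono fun y hy => hy.1) (fun y hy => ?_) (fun y hy => ?_)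
      ⟨hx, hxc⟩ ⟨hac, le_rfl⟩ hxc
    all_goals rw [interior_Ioc] at hy
    · exact (hf y hy.1).hasDerivWithinAt
    · exact hle y hy.1 hy.2

theorem hasDerivAt_pinskerGapDeriv {t : ℝ} (ht : 0 < t) :
    HasDerivAt pinskerGapDeriv (1 / t - 27 / (t + 2) ^ 3) t := by
  have hnum : HasDerivAt (fun t => (t - 1) * (t + 5)) (1 * (t + 5) + (t - 1) * 1) t :=
    ((hasDerivAt_id t).sub_const 1).mul ((hasDerivAt_id t).add_const 5)
  have hden : HasDerivAt (fun t => (t + 2) ^ 2) (2 * (t + 2) ^ 1 * 1) t :=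
    ((hasDerivAt_id t).add_const 2).pow 2
  refine ((hasDerivAt_log ht.ne').sub
    ((hnum.div hden (by positivity)).const_mul (3 / 2))).congr_deriv ?_
  field_simp
  ring

theorem hasDerivAt_pinskerGap {t : ℝ} (ht : 0 < t) :
    HasDerivAt pinskerGap (pinskerGapDeriv t) t := by
  have hnum : HasDerivAt (fun t => (t - 1) ^ 2) (2 * (t - 1) ^ 1 * 1) t :=
    ((hasDerivAt_id t).sub_const 1).pow 2
  have hden : HasDerivAt (fun t => t + 2) 1 t := (hasDerivAt_id t).add_const 2
  have hmulLog : HasDerivAt (fun t => t * log t) (1 * log t + t * t⁻¹) t :=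
    (hasDerivAt_id t).mul (hasDerivAt_log ht.ne')
  refine (((hmulLog.sub (hasDerivAt_id t)).add_const 1).sub
    ((hnum.div hden (by positivity)).const_mul (3 / 2))).congr_deriv ?_
  rw [pinskerGapDeriv]
  field_simp
  ring

theorem monotoneOn_pinskerGapDeriv : MonotoneOn pinskerGapDeriv (Ioi 0) := by
  refine monotoneOn_of_hasDerivWithinAt_nonneg (f' := fun t => 1 / t - 27 / (t + 2) ^ 3)
    (convex_Ioi 0) (fun t ht => (hasDerivAt_pinskerGapDeriv ht).continuousAt.continuousWithinAt)
    (fun t ht => ?_) (fun t ht => ?_)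
  all_goals rw [interior_Ioi, Set.mem_Ioi] at ht
  · exact (hasDerivAt_pinskerGapDeriv ht).hasDerivWithinAt
  · -- AM-GM: `27 t ≤ (t + 1 + 1)³`
    rw [sub_nonneg, div_le_div_iff₀ (by positivity) ht]
    nlinarith [sq_nonneg (t - 1), mul_pos ht ht]

theorem pinskerGap_nonneg {t : ℝ} (ht : 0 < t) : 0 ≤ pinskerGap t := by
  have h1 : pinskerGapDeriv 1 = 0 := by norm_num [pinskerGapDeriv]
  have hmin := le_of_hasDerivAt_of_sign (fun _ => hasDerivAt_pinskerGap)
    (fun y hy hy1 => h1 ▸ monotoneOn_pinskerGapDeriv hy (Set.mem_Ioi.2 one_pos) hy1.le)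
    (fun y hy => h1 ▸ monotoneOn_pinskerGapDeriv (Set.mem_Ioi.2 one_pos)
      (Set.mem_Ioi.2 (one_pos.trans hy)) hy.le) one_pos ht
  simpa [pinskerGap] using hmin

section Distributions

variable {ι : Type*} [Fintype ι]

theorem abs_sum_mul_le_sum_abs_mul {u f : ι → ℝ} {C : ℝ} (hf : ∀ i, |f i| ≤ C) :
    |∑ i, u i * f i| ≤ (∑ i, |u i|) * C :=
  calc |∑ i, u i * f i| ≤ ∑ i, |u i| * C := (abs_sum_le_sum_abs _ _).trans <|
        sum_le_sum fun i _ => by rw [abs_mul]; exact mul_le_mul_of_nonneg_left (hf i) (abs_nonneg _)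
    _ = (∑ i, |u i|) * C := (sum_mul _ _ _).symm

theorem abs_sum_mul_le_of_abs_le {w f : ι → ℝ} {C : ℝ} (hw : ∀ i, 0 ≤ w i)
    (hw1 : ∑ i, w i = 1) (hf : ∀ i, |f i| ≤ C) : |∑ i, w i * f i| ≤ C := by
  simpa [abs_of_nonneg (hw _), hw1] using abs_sum_mul_le_sum_abs_mul (u := w) hf

theorem three_halves_mul_sq_div_le_mul_log_div {x y : ℝ} (hx : 0 < x) (hy : 0 < y) :
    3 / 2 * ((x - y) ^ 2 / (x + 2 * y)) ≤ x * log (x / y) - x + y := by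
  have hgap : y * pinskerGap (x / y) =
      x * log (x / y) - x + y - 3 / 2 * ((x - y) ^ 2 / (x + 2 * y)) := by
    rw [pinskerGap]
    field_simp
  linarith [mul_nonneg hy.le (pinskerGap_nonneg (div_pos hx hy))]

theorem sum_abs_sub_le_sqrt_two_mul_sum_mul_log_div {p q : ι → ℝ} (hp : ∀ i, 0 < p i)
    (hq : ∀ i, 0 < q i) (hp1 : ∑ i, p i = 1) (hq1 : ∑ i, q i = 1) :
    ∑ i, |p i - q i| ≤ √(2 * ∑ i, p i * log (p i / q i)) := by
  have htitu := sq_sum_div_le_sum_sq_div univ (fun i => |p i - q i|)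
    (g := fun i => p i + 2 * q i) fun i _ => by linarith [hp i, hq i]
  have hmass : ∑ i, (p i + 2 * q i) = 3 := by
    rw [sum_add_distrib, ← mul_sum, hp1, hq1]
    norm_num
  have hkl : 3 / 2 * ∑ i, (p i - q i) ^ 2 / (p i + 2 * q i) ≤ ∑ i, p i * log (p i / q i) :=
    calc 3 / 2 * ∑ i, (p i - q i) ^ 2 / (p i + 2 * q i)
        ≤ ∑ i, (p i * log (p i / q i) - p i + q i) := by
          rw [mul_sum]
          exact sum_le_sum fun i _ => three_halves_mul_sq_div_le_mul_log_div (hp i) (hq i)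
      _ = ∑ i, p i * log (p i / q i) := by
          rw [sum_add_distrib, sum_sub_distrib, hp1, hq1]
          ring
  simp only [sq_abs, hmass] at htitu
  exact le_sqrt_of_sq_le (by linarith)

theorem sum_mul_log_div_nonneg {p q : ι → ℝ} (hp : ∀ i, 0 < p i) (hq : ∀ i, 0 < q i)
    (hpq : ∑ i, q i ≤ ∑ i, p i) : 0 ≤ ∑ i, p i * log (p i / q i) := by
  have hterm : ∀ i, p i - q i ≤ p i * log (p i / q i) := fun i => by
    have hlog := one_sub_inv_le_log_of_pos (div_pos (hp i) (hq i))
    rw [inv_div] at hlog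
    calc p i - q i = p i * (1 - q i / p i) := by
          rw [mul_sub, mul_one, mul_div_cancel₀ _ (hp i).ne']
      _ ≤ p i * log (p i / q i) := mul_le_mul_of_nonneg_left hlog (hp i).le
  calc 0 ≤ ∑ i, (p i - q i) := by rw [sum_sub_distrib]; linarith
    _ ≤ _ := sum_le_sum fun i _ => hterm i

theorem abs_sum_mul_log_le_log_card {p : ι → ℝ} (hp : ∀ i, 0 < p i) (hp1 : ∑ i, p i = 1) :
    |∑ i, p i * log (p i)| ≤ log (Fintype.card ι) := by
  have : Nonempty ι :=
    univ_nonempty_iff.mp (nonempty_of_sum_ne_zero (by rw [hp1]; exact one_ne_zero))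
  have hn : (0 : ℝ) < Fintype.card ι := by exact_mod_cast Fintype.card_pos
  have hnonpos : ∑ i, p i * log (p i) ≤ 0 := sum_nonpos fun i _ =>
    mul_log_nonpos (hp i).le (hp1 ▸ single_le_sum (fun j _ => (hp j).le) (mem_univ i))
  have huniform := sum_mul_log_div_nonneg hp (q := fun _ => (Fintype.card ι : ℝ)⁻¹)
    (fun _ => by positivity) (by simp [hp1, hn.ne'])
  simp only [div_inv_eq_mul, log_mul (hp _).ne' hn.ne', mul_add, sum_add_distrib, ← sum_mul,
    hp1, one_mul] at huniform
  rw [abs_of_nonpos hnonpos]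
  linarith

theorem softAdvantage_sub_kl_le_of_abs_sub_le {p q Qp Qq : ι → ℝ} {τ v C α : ℝ}
    (hp : ∀ a, 0 < p a) (hq : ∀ a, 0 < q a) (hp1 : ∑ a, p a = 1)
    (hq1 : ∑ a, q a = 1) (hQ : ∀ a, |Qp a - Qq a| ≤ C)
    (hα : ∑ a, p a * log (p a / q a) ≤ α) :
    ∑ a, p a * (Qq a - τ * log (q a) - v) - τ * ∑ a, p a * log (p a / q a) - C * √(2 * α) ≤
      ∑ a, p a * (Qp a - τ * log (p a)) - v - ∑ a, q a * (Qp a - Qq a) := by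
  obtain ⟨a₀, -⟩ := nonempty_of_sum_ne_zero (hp1 ▸ one_ne_zero : ∑ a, p a ≠ 0)
  have hC : 0 ≤ C := (abs_nonneg _).trans (hQ a₀)
  have hterm : ∀ a, p a * (Qp a - τ * log (p a)) - q a * (Qp a - Qq a) =
      p a * (Qq a - τ * log (q a) - v) - τ * (p a * log (p a / q a))
        + (p a - q a) * (Qp a - Qq a) + p a * v := fun a => by
    rw [log_div (hp a).ne' (hq a).ne']
    ring
  have hidentity : ∑ a, p a * (Qp a - τ * log (p a)) - v - ∑ a, q a * (Qp a - Qq a) =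
      ∑ a, p a * (Qq a - τ * log (q a) - v) - τ * ∑ a, p a * log (p a / q a)
        + ∑ a, (p a - q a) * (Qp a - Qq a) := by
    rw [sub_right_comm, ← sum_sub_distrib]
    simp only [hterm, sum_add_distrib, sum_sub_distrib, ← mul_sum, ← sum_mul, hp1, one_mul]
    ring
  have hcorrection : |∑ a, (p a - q a) * (Qp a - Qq a)| ≤ C * √(2 * α) :=
    calc |∑ a, (p a - q a) * (Qp a - Qq a)| ≤ (∑ a, |p a - q a|) * C :=
          abs_sum_mul_le_sum_abs_mul hQ
      _ ≤ √(2 * ∑ a, p a * log (p a / q a)) * C := by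
          gcongr
          exact sum_abs_sub_le_sqrt_two_mul_sum_mul_log_div hp hq hp1 hq1
      _ ≤ C * √(2 * α) := by
          rw [mul_comm]
          gcongr
  rw [hidentity]
  linarith [neg_abs_le (∑ a, (p a - q a) * (Qp a - Qq a))]

end Distributions

open Matrix

section MDP

variable {S A : Type*} [Fintype A]

def transitionMatrix (P : S → A → S → ℝ) (pol : S → A → ℝ) : Matrix S S ℝ :=
  Matrix.of fun s s' => ∑ a, pol s a * P s a s'

theorem transitionMatrix_nonneg {P : S → A → S → ℝ} (hP0 : ∀ s a s', 0 ≤ P s a s')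
    {pol : S → A → ℝ} (hpol : ∀ s a, 0 < pol s a) (s s' : S) :
    0 ≤ transitionMatrix P pol s s' :=
  sum_nonneg fun a _ => mul_nonneg (hpol s a).le (hP0 s a s')

variable [Fintype S]

theorem sum_transitionMatrix {P : S → A → S → ℝ} (hP1 : ∀ s a, ∑ s', P s a s' = 1)
    {pol : S → A → ℝ} (hpol1 : ∀ s, ∑ a, pol s a = 1) (s : S) :
    ∑ s', transitionMatrix P pol s s' = 1 := by
  simp only [transitionMatrix, of_apply]
  rw [sum_comm]
  simp [← mul_sum, hP1, hpol1]

theorem transitionMatrix_mulVec_apply (P : S → A → S → ℝ) (pol : S → A → ℝ) (v : S → ℝ)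
    (s : S) : (transitionMatrix P pol *ᵥ v) s = ∑ a, pol s a * ∑ s', P s a s' * v s' := by
  simp only [transitionMatrix, mulVec, dotProduct, of_apply, sum_mul, mul_sum, mul_assoc]
  exact sum_comm

theorem vecMul_transitionMatrix_apply (P : S → A → S → ℝ) (pol : S → A → ℝ) (d : S → ℝ)
    (s : S) : (d ᵥ* transitionMatrix P pol) s = ∑ s', ∑ a, d s' * (pol s' a * P s' a s) := by
  simp only [transitionMatrix, vecMul, dotProduct, of_apply, mul_sum]

/-- The fixed-point form of `d = (1 - γ) ∑ₜ γᵗ ρ Mᵗ`. -/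
def IsDiscountedVisitation (M : Matrix S S ℝ) (γ : ℝ) (ρ d : S → ℝ) : Prop :=
  ∀ s, d s = (1 - γ) * ρ s + γ * (d ᵥ* M) s

namespace IsDiscountedVisitation

variable {M : Matrix S S ℝ} {γ : ℝ} {ρ d : S → ℝ}

theorem one_sub_mul_dotProduct (hd : IsDiscountedVisitation M γ ρ d) (v : S → ℝ) :
    (1 - γ) * (ρ ⬝ᵥ v) = d ⬝ᵥ (v - γ • M *ᵥ v) := by
  have hρ : (1 - γ) • ρ = d - γ • (d ᵥ* M) := by
    funext s
    simp [hd s]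
  rw [← smul_eq_mul, ← smul_dotProduct, hρ, sub_dotProduct, smul_dotProduct, ← dotProduct_mulVec,
    dotProduct_sub, dotProduct_smul]

theorem nonneg (hd : IsDiscountedVisitation M γ ρ d) (hM0 : ∀ i j, 0 ≤ M i j)
    (hM1 : ∀ i, ∑ j, M i j ≤ 1) (hρ : ∀ s, 0 ≤ ρ s) (hγ0 : 0 ≤ γ) (hγ1 : γ < 1) (s : S) :
    0 ≤ d s := by
  classical
  by_contra! hs
  -- `N` carries the negative mass of `d`; one step of `M` moves at most that mass back into `N`.
  set N := univ.filter fun s => d s < 0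
  set K : S → ℝ := fun s' => ∑ s ∈ N, M s' s
  have hK0 : ∀ s', 0 ≤ K s' := fun s' => sum_nonneg fun s _ => hM0 s' s
  have hK1 : ∀ s', K s' ≤ 1 := fun s' =>
    (sum_le_sum_of_subset_of_nonneg (subset_univ N) fun s _ _ => hM0 s' s).trans (hM1 s')
  have hneg : ∑ s ∈ N, d s < 0 :=
    sum_neg (fun s hs => (mem_filter.1 hs).2) ⟨s, mem_filter.2 ⟨mem_univ s, hs⟩⟩
  have hflow : ∑ s ∈ N, (d ᵥ* M) s = ∑ s', d s' * K s' := by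
    simp only [vecMul, dotProduct, K, mul_sum]
    exact sum_comm
  have hinflow : ∑ s ∈ N, d s ≤ ∑ s', d s' * K s' :=
    calc ∑ s ∈ N, d s ≤ ∑ s ∈ N, d s * K s := sum_le_sum fun s hs => by
            nlinarith [(mem_filter.1 hs).2, hK1 s]
      _ ≤ ∑ s', d s' * K s' := sum_le_sum_of_subset_of_nonneg (subset_univ N) fun s _ hs =>
            mul_nonneg (not_lt.1 fun h => hs (mem_filter.2 ⟨mem_univ s, h⟩)) (hK0 s)
  have hbalance : ∑ s ∈ N, d s = (1 - γ) * ∑ s ∈ N, ρ s + γ * ∑ s', d s' * K s' := by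
    rw [← hflow, mul_sum, mul_sum, ← sum_add_distrib]
    exact sum_congr rfl fun s _ => hd s
  nlinarith [sum_nonneg fun s (_ : s ∈ N) => hρ s, mul_le_mul_of_nonneg_left hinflow hγ0]

end IsDiscountedVisitation

def IsSoftValue (P : S → A → S → ℝ) (r : S → A → ℝ) (γ τ : ℝ) (pol : S → A → ℝ) (V : S → ℝ) :
    Prop :=
  ∀ s, V s = ∑ a, pol s a * (r s a + γ * (∑ s', P s a s' * V s') - τ * log (pol s a))

theorem IsSoftValue.abs_le {P : S → A → S → ℝ} {r : S → A → ℝ} {γ τ rmax : ℝ}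
    {pol : S → A → ℝ} {V : S → ℝ} (hV : IsSoftValue P r γ τ pol V)
    (hP0 : ∀ s a s', 0 ≤ P s a s') (hP1 : ∀ s a, ∑ s', P s a s' = 1)
    (hr : ∀ s a, |r s a| ≤ rmax) (hγ0 : 0 ≤ γ) (hγ1 : γ < 1) (hτ : 0 ≤ τ)
    (hpol : ∀ s a, 0 < pol s a) (hpol1 : ∀ s, ∑ a, pol s a = 1) (s : S) :
    |V s| ≤ (rmax + τ * log (Fintype.card A)) / (1 - γ) := by
  obtain ⟨s₀, -, hmax⟩ := exists_max_image univ (fun s => |V s|) ⟨s, mem_univ s⟩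
  have hQ : ∀ a, |r s₀ a + γ * ∑ s', P s₀ a s' * V s'| ≤ rmax + γ * |V s₀| := fun a => by
    have hPV := abs_sum_mul_le_of_abs_le (hP0 s₀ a) (hP1 s₀ a) fun s' => hmax s' (mem_univ s')
    refine (abs_add_le _ _).trans (add_le_add (hr s₀ a) ?_)
    rw [abs_mul, abs_of_nonneg hγ0]
    exact mul_le_mul_of_nonneg_left hPV hγ0
  have hsplit : V s₀ = ∑ a, pol s₀ a * (r s₀ a + γ * ∑ s', P s₀ a s' * V s')
      - τ * ∑ a, pol s₀ a * log (pol s₀ a) := by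
    rw [hV s₀, mul_sum, ← sum_sub_distrib]
    exact sum_congr rfl fun a _ => by ring
  have hfix : |V s₀| ≤ rmax + γ * |V s₀| + τ * log (Fintype.card A) := by
    refine (congrArg abs hsplit).le.trans <| (abs_sub _ _).trans (add_le_add
      (abs_sum_mul_le_of_abs_le (fun a => (hpol s₀ a).le) (hpol1 s₀) hQ) ?_)
    rw [abs_mul, abs_of_nonneg hτ]
    exact mul_le_mul_of_nonneg_left (abs_sum_mul_log_le_log_card (hpol s₀) (hpol1 s₀)) hτ
  rw [le_div_iff₀ (by linarith)]
  nlinarith [hmax s (mem_univ s)]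

theorem IsSoftValue.softAdvantage_sub_kl_le {P : S → A → S → ℝ} {r : S → A → ℝ}
    {γ τ B α : ℝ} {πold πnew : S → A → ℝ} {Qold : S → A → ℝ} {Vold Vnew : S → ℝ}
    (hVnew : IsSoftValue P r γ τ πnew Vnew) (hP0 : ∀ s a s', 0 ≤ P s a s')
    (hP1 : ∀ s a, ∑ s', P s a s' = 1) (hγ0 : 0 ≤ γ) (hγ1 : γ ≤ 1)
    (hπold : ∀ s a, 0 < πold s a) (hπold1 : ∀ s, ∑ a, πold s a = 1)
    (hπnew : ∀ s a, 0 < πnew s a) (hπnew1 : ∀ s, ∑ a, πnew s a = 1)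
    (hQold : ∀ s a, Qold s a = r s a + γ * ∑ s', P s a s' * Vold s')
    (hVold_le : ∀ s, |Vold s| ≤ B) (hVnew_le : ∀ s, |Vnew s| ≤ B) {s : S}
    (hα : ∑ a, πnew s a * log (πnew s a / πold s a) ≤ α) :
    ∑ a, πnew s a * (Qold s a - τ * log (πold s a) - Vold s)
        - τ * ∑ a, πnew s a * log (πnew s a / πold s a) - 2 * B * √(2 * α) ≤
      (Vnew - Vold - γ • transitionMatrix P πold *ᵥ (Vnew - Vold)) s := by
  have hQdiff : ∀ a, r s a + γ * ∑ s', P s a s' * Vnew s' - Qold s a =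
      γ * ∑ s', P s a s' * (Vnew - Vold) s' := fun a => by
    simp only [hQold, Pi.sub_apply, mul_sub, sum_sub_distrib]
    ring
  have hQdiff_le : ∀ a, |r s a + γ * ∑ s', P s a s' * Vnew s' - Qold s a| ≤ 2 * B := fun a => by
    have hPΔ : |∑ s', P s a s' * (Vnew - Vold) s'| ≤ 2 * B :=
      abs_sum_mul_le_of_abs_le (hP0 s a) (hP1 s a) fun s' =>
        (abs_sub (Vnew s') (Vold s')).trans (by linarith [hVnew_le s', hVold_le s'])
    rw [hQdiff, abs_mul, abs_of_nonneg hγ0]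
    nlinarith [abs_nonneg (∑ s', P s a s' * (Vnew - Vold) s')]
  have h := softAdvantage_sub_kl_le_of_abs_sub_le (τ := τ) (v := Vold s) (hπnew s) (hπold s)
    (hπnew1 s) (hπold1 s) hQdiff_le hα
  simp only [hQdiff, mul_left_comm _ γ, ← mul_sum, ← hVnew s] at h
  rwa [Pi.sub_apply, Pi.smul_apply, transitionMatrix_mulVec_apply, smul_eq_mul, Pi.sub_apply]

end MDP

theorem improvement_lower_bound_dpiold_general
    {S A : Type*} [Fintype S] [Fintype A]
    (P : S → A → S → ℝ) (hP0 : ∀ s a s', 0 ≤ P s a s') (hP1 : ∀ s a, ∑ s', P s a s' = 1)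
    (r : S → A → ℝ) (rmax : ℝ) (hr : ∀ s a, |r s a| ≤ rmax)
    (γ : ℝ) (hγ0 : 0 ≤ γ) (hγ1 : γ < 1)
    (ρ : S → ℝ) (hρ0 : ∀ s, 0 ≤ ρ s)
    (τ : ℝ) (hτ : 0 ≤ τ)
    (πold πnew : S → A → ℝ)
    (hπold : ∀ s a, 0 < πold s a) (hπold1 : ∀ s, ∑ a, πold s a = 1)
    (hπnew : ∀ s a, 0 < πnew s a) (hπnew1 : ∀ s, ∑ a, πnew s a = 1)
    (Vold : S → ℝ) (Qold : S → A → ℝ)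
    (hQold : ∀ s a, Qold s a = r s a + γ * ∑ s', P s a s' * Vold s')
    (hVold : ∀ s, Vold s = ∑ a, πold s a * (Qold s a - τ * Real.log (πold s a)))
    (Vnew : S → ℝ)
    (hVnew : ∀ s, Vnew s = ∑ a, πnew s a *
      (r s a + γ * (∑ s', P s a s' * Vnew s') - τ * Real.log (πnew s a)))
    -- normalized discounted state visitation distribution of the old policy
    (d : S → ℝ)
    (hd : ∀ s, d s = (1 - γ) * ρ s + γ * ∑ s', ∑ a, d s' * (πold s' a * P s' a s))
    (α : ℝ)
    (hα : ∀ s, (∑ a, πnew s a * Real.log (πnew s a / πold s a)) ≤ α) :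
    (∑ s, ρ s * Vnew s) - (∑ s, ρ s * Vold s) ≥
      (1 / (1 - γ)) * ∑ s, d s *
        ((∑ a, πnew s a * (Qold s a - τ * Real.log (πold s a) - Vold s))
          - τ * (∑ a, πnew s a * Real.log (πnew s a / πold s a))
          - 4 * Real.sqrt 2 * ((rmax + τ * Real.log (Fintype.card A)) / (1 - γ))
              * Real.sqrt α) := by
  set Vmax := (rmax + τ * Real.log (Fintype.card A)) / (1 - γ)
  have hVold_le : ∀ s, |Vold s| ≤ Vmax :=
    IsSoftValue.abs_le (fun s => (hVold s).trans (sum_congr rfl fun a _ => by rw [hQold]))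
      hP0 hP1 hr hγ0 hγ1 hτ hπold hπold1
  have hVnew_le : ∀ s, |Vnew s| ≤ Vmax :=
    IsSoftValue.abs_le hVnew hP0 hP1 hr hγ0 hγ1 hτ hπnew hπnew1
  have hvisit : IsDiscountedVisitation (transitionMatrix P πold) γ ρ d := fun s => by
    rw [vecMul_transitionMatrix_apply]
    exact hd s
  have hperformance : (∑ s, ρ s * Vnew s) - (∑ s, ρ s * Vold s) = (1 / (1 - γ)) *
      ∑ s, d s * (Vnew - Vold - γ • transitionMatrix P πold *ᵥ (Vnew - Vold)) s := by
    rw [one_div_mul_eq_div, eq_div_iff (by linarith), mul_comm]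
    exact (congrArg ((1 - γ) * ·) (dotProduct_sub ρ Vnew Vold)).symm.trans
      (hvisit.one_sub_mul_dotProduct (Vnew - Vold))
  rw [hperformance, ge_iff_le]
  gcongr with s
  · exact hvisit.nonneg (transitionMatrix_nonneg hP0 hπold)
      (fun s => (sum_transitionMatrix hP1 hπold1 s).le) hρ0 hγ0 hγ1 s
  · have hgain := IsSoftValue.softAdvantage_sub_kl_le hVnew hP0 hP1 hγ0 hγ1.le hπold hπold1
      hπnew hπnew1 hQold hVold_le hVnew_le (hα s)
    have hVmax : 0 ≤ Vmax := (abs_nonneg _).trans (hVold_le s)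
    rw [sqrt_mul zero_le_two] at hgain
    nlinarith [mul_nonneg (mul_nonneg hVmax (sqrt_nonneg 2)) (sqrt_nonneg α)]

/-- Lower bound for improvement under `d^{π_old}`: if
`KL(π_new(·|s) ‖ π_old(·|s)) ≤ α` for every state `s`, then
`η_τ(π_new) − η_τ(π_old) ≥ (1/(1−γ)) E_{S∼d^{π_old}}[∑ₐ π_new(a|S) A_τ^{π_old}(S,a)
  − τ·KL(π_new‖π_old)(S) − 4√2 · V_{τ,max} · √α]`
where `V_{τ,max} = (r_max + τ log|A|)/(1−γ)`. -/
theorem improvement_lower_bound_dpiold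
    {S A : Type*} [Fintype S] [Fintype A] [Nonempty S] [Nonempty A]
    (P : S → A → S → ℝ) (hP0 : ∀ s a s', 0 ≤ P s a s') (hP1 : ∀ s a, ∑ s', P s a s' = 1)
    (r : S → A → ℝ) (rmax : ℝ) (hr : ∀ s a, |r s a| ≤ rmax)
    (γ : ℝ) (hγ0 : 0 ≤ γ) (hγ1 : γ < 1)
    (ρ : S → ℝ) (hρ0 : ∀ s, 0 ≤ ρ s) (hρ1 : ∑ s, ρ s = 1)
    (τ : ℝ) (hτ : 0 ≤ τ)
    (πold πnew : S → A → ℝ)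
    (hπold : ∀ s a, 0 < πold s a) (hπold1 : ∀ s, ∑ a, πold s a = 1)
    (hπnew : ∀ s a, 0 < πnew s a) (hπnew1 : ∀ s, ∑ a, πnew s a = 1)
    (Vold : S → ℝ) (Qold : S → A → ℝ)
    (hQold : ∀ s a, Qold s a = r s a + γ * ∑ s', P s a s' * Vold s')
    (hVold : ∀ s, Vold s = ∑ a, πold s a * (Qold s a - τ * Real.log (πold s a)))
    (Vnew : S → ℝ)
    (hVnew : ∀ s, Vnew s = ∑ a, πnew s a *
      (r s a + γ * (∑ s', P s a s' * Vnew s') - τ * Real.log (πnew s a)))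
    -- normalized discounted state visitation distribution of the old policy
    (d : S → ℝ)
    (hd : ∀ s, d s = (1 - γ) * ρ s + γ * ∑ s', ∑ a, d s' * (πold s' a * P s' a s))
    (α : ℝ)
    (hα : ∀ s, (∑ a, πnew s a * Real.log (πnew s a / πold s a)) ≤ α) :
    (∑ s, ρ s * Vnew s) - (∑ s, ρ s * Vold s) ≥
      (1 / (1 - γ)) * ∑ s, d s *
        ((∑ a, πnew s a * (Qold s a - τ * Real.log (πold s a) - Vold s))
          - τ * (∑ a, πnew s a * Real.log (πnew s a / πold s a))
          - 4 * Real.sqrt 2 * ((rmax + τ * Real.log (Fintype.card A)) / (1 - γ))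
              * Real.sqrt α) :=
  improvement_lower_bound_dpiold_general P hP0 hP1 r rmax hr γ hγ0 hγ1 ρ hρ0 τ hτ πold πnew hπold
    hπold1 hπnew hπnew1 Vold Qold hQold hVold Vnew hVnew d hd α hα
end

section
/- Hard forward KL limit: for a finite action set A, Q : A → ℝ with set of maximizers A* of size n*, and a policy π with full support, lim_{τ→0⁺} [KL(B_τQ ‖ π) + H(B_τQ)] = −(1/n*)∑_{a* ∈ A*} log π(a*), where H denotes Shannon entropy. -/
open Finset Filter
open scoped Classical

open Topology

/-!
Since `KL(B ‖ π) + H(B) = -∑ B(a) log π(a)` is linear in `B`, it suffices to know the limit of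
the Boltzmann distribution itself. Dividing numerator and denominator by `exp (M / τ)`, with
`M = max Q`, every weight becomes `exp ((Q a - M) / τ)`, which tends to `1` on the maximizers and
to `0` elsewhere; so `B_τQ` tends to the uniform distribution on the maximizers.
-/

theorem sum_mul_log_div_add_neg_sum_mul_log {ι : Type*} (s : Finset ι) (p q : ι → ℝ)
    (hq : ∀ i ∈ s, q i ≠ 0) :
    (∑ i ∈ s, p i * Real.log (p i / q i)) + -(∑ i ∈ s, p i * Real.log (p i))
      = ∑ i ∈ s, p i * -Real.log (q i) := by
  have hterm : ∀ i ∈ s,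
      p i * Real.log (p i / q i) = p i * Real.log (p i) + p i * -Real.log (q i) := by
    intro i hi
    rcases eq_or_ne (p i) 0 with hp | hp
    · simp [hp]
    · rw [Real.log_div hp (hq i hi)]
      ring
  rw [sum_congr rfl hterm, sum_add_distrib]
  ring

theorem tendsto_exp_div_nhdsGT_zero_of_neg {x : ℝ} (hx : x < 0) :
    Tendsto (fun τ : ℝ => Real.exp (x / τ)) (𝓝[>] 0) (𝓝 0) := by
  have h : Tendsto (fun τ : ℝ => x / τ) (𝓝[>] 0) atBot := by
    simpa only [div_eq_mul_inv] using tendsto_inv_nhdsGT_zero.const_mul_atTop_of_neg hx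
  exact Real.tendsto_exp_atBot.comp h

section Boltzmann

variable {A : Type*} [Fintype A]

theorem boltzmann_eq_exp_sub_div (Q : A → ℝ) (c τ : ℝ) (a : A) :
    boltzmann Q τ a = Real.exp ((Q a - c) / τ) / ∑ b, Real.exp ((Q b - c) / τ) := by
  simp only [sub_div, Real.exp_sub, ← sum_div, div_div_div_cancel_right₀ (Real.exp_ne_zero _)]
  rfl

variable [Nonempty A]

noncomputable def maximizers (Q : A → ℝ) : Finset A :=
  univ.filter fun a => Q a = univ.sup' univ_nonempty Q

theorem card_maximizers_pos (Q : A → ℝ) : 0 < (maximizers Q).card := by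
  obtain ⟨a, -, ha⟩ := exists_mem_eq_sup' (univ_nonempty (α := A)) Q
  exact card_pos.2 ⟨a, mem_filter.2 ⟨mem_univ a, ha.symm⟩⟩

theorem tendsto_exp_sub_sup'_div_nhdsGT_zero (Q : A → ℝ) (a : A) :
    Tendsto (fun τ : ℝ => Real.exp ((Q a - univ.sup' univ_nonempty Q) / τ)) (𝓝[>] 0)
      (𝓝 (if a ∈ maximizers Q then 1 else 0)) := by
  by_cases ha : a ∈ maximizers Q
  · have hQa : Q a = univ.sup' univ_nonempty Q := (mem_filter.1 ha).2
    simp [ha, hQa]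
  · have hlt : Q a - univ.sup' univ_nonempty Q < 0 :=
      sub_neg.2 <| (le_sup' Q (mem_univ a)).lt_of_ne fun h => ha (mem_filter.2 ⟨mem_univ a, h⟩)
    simpa [ha] using tendsto_exp_div_nhdsGT_zero_of_neg hlt

theorem tendsto_boltzmann_nhdsGT_zero (Q : A → ℝ) (a : A) :
    Tendsto (fun τ => boltzmann Q τ a) (𝓝[>] 0)
      (𝓝 ((if a ∈ maximizers Q then 1 else 0) / (maximizers Q).card)) := by
  have hden : Tendsto (fun τ : ℝ => ∑ b, Real.exp ((Q b - univ.sup' univ_nonempty Q) / τ))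
      (𝓝[>] 0) (𝓝 ((maximizers Q).card : ℝ)) := by
    simpa [sum_boole] using
      tendsto_finsetSum univ fun b _ => tendsto_exp_sub_sup'_div_nhdsGT_zero Q b
  simp only [boltzmann_eq_exp_sub_div Q (univ.sup' univ_nonempty Q)]
  exact (tendsto_exp_sub_sup'_div_nhdsGT_zero Q a).div hden
    (Nat.cast_ne_zero.2 (card_maximizers_pos Q).ne')

theorem tendsto_sum_boltzmann_mul_nhdsGT_zero (Q f : A → ℝ) :
    Tendsto (fun τ => ∑ a, boltzmann Q τ a * f a) (𝓝[>] 0)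
      (𝓝 ((1 / (maximizers Q).card : ℝ) * ∑ a ∈ maximizers Q, f a)) := by
  have h := tendsto_finsetSum univ fun a _ =>
    (tendsto_boltzmann_nhdsGT_zero Q a).mul_const (f a)
  convert h using 2
  simp only [ite_div, ite_mul, zero_div, zero_mul, sum_ite_mem, univ_inter, mul_sum]

end Boltzmann

theorem hard_fkl_limit_general
    {A : Type*} [Fintype A] [Nonempty A] (Q : A → ℝ)
    (π : A → ℝ) (hπ : ∀ a, 0 < π a) :
    Tendsto
      (fun τ : ℝ =>
        (∑ a, boltzmann Q τ a * Real.log (boltzmann Q τ a / π a))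
          + -(∑ a, boltzmann Q τ a * Real.log (boltzmann Q τ a)))
      (nhdsWithin 0 (Set.Ioi 0))
      (nhds (-(1 / ((Finset.univ.filter
          (fun a => Q a = Finset.univ.sup' Finset.univ_nonempty Q)).card : ℝ)) *
        ∑ a ∈ Finset.univ.filter
          (fun a => Q a = Finset.univ.sup' Finset.univ_nonempty Q), Real.log (π a))) := by
  simp only [sum_mul_log_div_add_neg_sum_mul_log _ _ π fun a _ => (hπ a).ne']
  convert tendsto_sum_boltzmann_mul_nhdsGT_zero Q (fun a => -Real.log (π a)) using 2
  rw [sum_neg_distrib, mul_neg, neg_mul]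
  rfl

/-- Hard forward KL limit: for a policy `π` with full support,
`lim_{τ→0⁺} [KL(B_τQ ‖ π) + H(B_τQ)] = −(1/n*) ∑_{a* ∈ A*} log π(a*)`,
where `A*` is the set of maximizers of `Q` and `n* = |A*|`. -/
theorem hard_fkl_limit
    {A : Type*} [Fintype A] [Nonempty A] (Q : A → ℝ)
    (π : A → ℝ) (hπ : ∀ a, 0 < π a) (hπ1 : ∑ a, π a = 1) :
    Tendsto
      (fun τ : ℝ =>
        (∑ a, boltzmann Q τ a * Real.log (boltzmann Q τ a / π a))
          + -(∑ a, boltzmann Q τ a * Real.log (boltzmann Q τ a)))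
      (nhdsWithin 0 (Set.Ioi 0))
      (nhds (-(1 / ((Finset.univ.filter
          (fun a => Q a = Finset.univ.sup' Finset.univ_nonempty Q)).card : ℝ)) *
        ∑ a ∈ Finset.univ.filter
          (fun a => Q a = Finset.univ.sup' Finset.univ_nonempty Q), Real.log (π a))) :=
  hard_fkl_limit_general Q π hπ
end

section
/- RKL/FKL ratio bound: for probability distributions P ≠ Q on a finite set with mutual absolute continuity, letting κ(t) = (t log t + 1 − t)/(t − 1 − log t) and β₁ = exp(−D_∞(P‖Q)) where D_∞(P‖Q) = log max_i p_i/q_i, one has KL(P‖Q) ≤ κ(β₁⁻¹)·KL(Q‖P). -/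
/-!
Writing `rᵢ = pᵢ / qᵢ`, both divergences are `q`-averages of convex functions of `r`:
`KL(P‖Q) = ∑ qᵢ φ(rᵢ)` with `φ t = t log t + 1 - t` and `KL(Q‖P) = ∑ qᵢ ψ(rᵢ)` with
`ψ t = t - 1 - log t`, and `κ = φ / ψ`. Since every `rᵢ` lies in `(0, M]` with
`M = maxᵢ rᵢ > 1`, it suffices to show `φ ≤ κ(M) ψ` on `(0, M]`. On `(0, 1]` this is `φ ≤ ψ`
(the logarithmic mean is at most the arithmetic mean) together with `κ(M) ≥ 1`; on `(1, M]` it is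
the monotonicity of `κ` on `(1, ∞)`, whose derivative has the sign of `(t - 1)² - t log² t`
(the logarithmic mean is at least the geometric mean).
-/

open Finset

noncomputable def kappa (t : ℝ) : ℝ :=
  (t * Real.log t + 1 - t) / (t - 1 - Real.log t)

open Real InformationTheory Set

noncomputable def revKlFun (t : ℝ) : ℝ := t - 1 - log t

lemma kappa_eq_klFun_div_revKlFun (t : ℝ) : kappa t = klFun t / revKlFun t := rfl

lemma revKlFun_nonneg {t : ℝ} (ht : 0 < t) : 0 ≤ revKlFun t :=
  sub_nonneg.2 (log_le_sub_one_of_pos ht)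

lemma revKlFun_pos {t : ℝ} (ht : 0 < t) (ht1 : t ≠ 1) : 0 < revKlFun t :=
  sub_pos.2 (log_lt_sub_one_of_pos ht ht1)

lemma hasDerivAt_revKlFun {t : ℝ} (ht : t ≠ 0) : HasDerivAt revKlFun (1 - t⁻¹) t :=
  ((hasDerivAt_id t).sub_const 1).sub (hasDerivAt_log ht)

lemma monotoneOn_Ioi_of_hasDerivAt_nonneg {f f' : ℝ → ℝ} {a : ℝ}
    (hf : ∀ x ∈ Ioi a, HasDerivAt f (f' x) x) (hf' : ∀ x ∈ Ioi a, 0 ≤ f' x) :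
    MonotoneOn f (Ioi a) :=
  monotoneOn_of_hasDerivWithinAt_nonneg (convex_Ioi a)
    (fun x hx => (hf x hx).continuousAt.continuousWithinAt)
    (by simpa only [interior_Ioi] using fun x hx => (hf x hx).hasDerivWithinAt)
    (by simpa only [interior_Ioi] using hf')

lemma monotoneOn_one_add_mul_log_sub :
    MonotoneOn (fun t => (1 + t) * log t - 2 * (t - 1)) (Ioi 0) := by
  refine monotoneOn_Ioi_of_hasDerivAt_nonneg (f' := fun t => revKlFun t⁻¹) (fun t ht => ?_)
    (fun t ht => revKlFun_nonneg (inv_pos.2 ht))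
  have ht0 : t ≠ 0 := ne_of_gt ht
  refine ((((hasDerivAt_id' t).const_add 1).mul (hasDerivAt_log ht0)).sub
    (((hasDerivAt_id' t).sub_const 1).const_mul 2)).congr_deriv ?_
  rw [revKlFun, log_inv]
  field_simp
  ring

lemma klFun_le_revKlFun {t : ℝ} (ht : 0 < t) (ht1 : t ≤ 1) : klFun t ≤ revKlFun t := by
  have := monotoneOn_one_add_mul_log_sub ht (mem_Ioi.2 one_pos) ht1
  simp only [log_one, mul_zero, sub_self] at this
  rw [klFun_apply, revKlFun]
  linarith

lemma revKlFun_le_klFun {t : ℝ} (ht : 1 ≤ t) : revKlFun t ≤ klFun t := by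
  have := monotoneOn_one_add_mul_log_sub (mem_Ioi.2 one_pos) (mem_Ioi.2 (one_pos.trans_le ht)) ht
  simp only [log_one, mul_zero, sub_self] at this
  rw [klFun_apply, revKlFun]
  linarith

lemma two_mul_mul_log_le_sq_sub_one {s : ℝ} (hs : 1 ≤ s) : 2 * s * log s ≤ s ^ 2 - 1 := by
  have hmono : MonotoneOn (fun s => s ^ 2 - 1 - 2 * s * log s) (Ioi 0) := by
    refine monotoneOn_Ioi_of_hasDerivAt_nonneg (f' := fun s => 2 * revKlFun s) (fun s hs => ?_)
      (fun s hs => mul_nonneg zero_le_two (revKlFun_nonneg hs))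
    have hs0 : s ≠ 0 := ne_of_gt hs
    refine (((hasDerivAt_pow 2 s).sub_const 1).sub
      (((hasDerivAt_id' s).const_mul 2).mul (hasDerivAt_log hs0))).congr_deriv ?_
    rw [revKlFun]
    field_simp
    ring
  have := hmono (mem_Ioi.2 one_pos) (mem_Ioi.2 (one_pos.trans_le hs)) hs
  simp only [log_one, mul_zero, one_pow, sub_self] at this
  linarith

lemma mul_log_sq_le_sub_one_sq {t : ℝ} (ht : 1 ≤ t) : t * log t ^ 2 ≤ (t - 1) ^ 2 := by
  have ht0 : 0 ≤ t := zero_le_one.trans ht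
  have hs : 1 ≤ √t := one_le_sqrt.2 ht
  have hsq : √t ^ 2 = t := sq_sqrt ht0
  have hlog : log t = 2 * log √t := by
    rw [log_sqrt ht0]
    ring
  have hbound := two_mul_mul_log_le_sq_sub_one hs
  have hnonneg : 0 ≤ 2 * √t * log √t := by
    have := log_nonneg hs
    positivity
  calc t * log t ^ 2 = √t ^ 2 * (2 * log √t) ^ 2 := by rw [hsq, ← hlog]
    _ = (2 * √t * log √t) ^ 2 := by ring
    _ ≤ (√t ^ 2 - 1) ^ 2 := pow_le_pow_left₀ hnonneg hbound 2
    _ = (t - 1) ^ 2 := by rw [hsq]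

lemma monotoneOn_kappa : MonotoneOn kappa (Ioi 1) := by
  refine monotoneOn_Ioi_of_hasDerivAt_nonneg
    (f' := fun t => (log t * revKlFun t - klFun t * (1 - t⁻¹)) / revKlFun t ^ 2)
    (fun t ht => ?_) (fun t ht => ?_)
  · have ht0 : t ≠ 0 := (zero_lt_one.trans ht).ne'
    exact (hasDerivAt_klFun ht0).div (hasDerivAt_revKlFun ht0)
      (revKlFun_pos (zero_lt_one.trans ht) (ne_of_gt ht)).ne'
  · have ht0 : 0 < t := zero_lt_one.trans ht
    have hnum : t * (log t * revKlFun t - klFun t * (1 - t⁻¹)) = (t - 1) ^ 2 - t * log t ^ 2 := by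
      rw [klFun_apply, revKlFun]
      field_simp
      ring
    have := mul_log_sq_le_sub_one_sq (le_of_lt ht)
    refine div_nonneg (nonneg_of_mul_nonneg_right ?_ ht0) (sq_nonneg _)
    rw [hnum]
    linarith

lemma klFun_le_kappa_mul_revKlFun {t M : ℝ} (hM : 1 < M) (ht : 0 < t) (htM : t ≤ M) :
    klFun t ≤ kappa M * revKlFun t := by
  have hpsiM : 0 < revKlFun M := revKlFun_pos (zero_lt_one.trans hM) (ne_of_gt hM)
  rcases le_or_gt t 1 with ht1 | ht1
  · have hκ : 1 ≤ kappa M := by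
      rw [kappa_eq_klFun_div_revKlFun, one_le_div hpsiM]
      exact revKlFun_le_klFun hM.le
    calc klFun t ≤ revKlFun t := klFun_le_revKlFun ht ht1
      _ ≤ kappa M * revKlFun t := le_mul_of_one_le_left (revKlFun_nonneg ht) hκ
  · have hpsit : 0 < revKlFun t := revKlFun_pos ht (ne_of_gt ht1)
    calc klFun t = kappa t * revKlFun t := by
          rw [kappa_eq_klFun_div_revKlFun, div_mul_cancel₀ _ hpsit.ne']
      _ ≤ kappa M * revKlFun t :=
          mul_le_mul_of_nonneg_right (monotoneOn_kappa ht1 hM htM) hpsit.le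

section Divergence

variable {ι : Type*} [Fintype ι] {P Q : ι → ℝ}

lemma sum_mul_log_div_eq_sum_mul_klFun (hsum : ∑ i, P i = ∑ i, Q i)
    (hac : ∀ i, Q i = 0 → P i = 0) :
    ∑ i, P i * log (P i / Q i) = ∑ i, Q i * klFun (P i / Q i) := by
  have hterm : ∀ i, Q i * klFun (P i / Q i) = P i * log (P i / Q i) + (Q i - P i) := by
    intro i
    by_cases hQ : Q i = 0
    · simp [hQ, hac i hQ]
    · rw [klFun_apply]
      field_simp
      ring
  rw [sum_congr rfl fun i _ => hterm i, sum_add_distrib, sum_sub_distrib, hsum, sub_self,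
    add_zero]

lemma sum_mul_log_div_eq_sum_mul_revKlFun (hsum : ∑ i, P i = ∑ i, Q i)
    (hac : ∀ i, Q i = 0 → P i = 0) :
    ∑ i, Q i * log (Q i / P i) = ∑ i, Q i * revKlFun (P i / Q i) := by
  have hterm : ∀ i, Q i * revKlFun (P i / Q i) = Q i * log (Q i / P i) + (P i - Q i) := by
    intro i
    by_cases hQ : Q i = 0
    · simp [hQ, hac i hQ]
    · rw [revKlFun, ← inv_div, log_inv]
      field_simp
      ring
  rw [sum_congr rfl fun i _ => hterm i, sum_add_distrib, sum_sub_distrib, hsum, sub_self,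
    add_zero]

end Divergence

/-- RKL/FKL ratio bound: for mutually absolutely continuous probability
distributions `P ≠ Q` on a finite set, with `β₁ = exp(−D_∞(P‖Q))`,
`KL(P‖Q) ≤ κ(β₁⁻¹)·KL(Q‖P)`, where `β₁⁻¹ = exp(D_∞(P‖Q))` and
`D_∞(P‖Q) = log maxᵢ pᵢ/qᵢ`. -/
theorem kl_ratio_bound
    {ι : Type*} [Fintype ι] [Nonempty ι]
    (P Q : ι → ℝ) (hP0 : ∀ i, 0 ≤ P i) (hQ0 : ∀ i, 0 ≤ Q i)
    (hP1 : ∑ i, P i = 1) (hQ1 : ∑ i, Q i = 1)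
    (hac : ∀ i, P i = 0 ↔ Q i = 0) (hne : P ≠ Q) :
    (∑ i, P i * Real.log (P i / Q i)) ≤
      kappa (Real.exp (Real.log
          (Finset.univ.sup' Finset.univ_nonempty fun i => P i / Q i)))
        * ∑ i, Q i * Real.log (Q i / P i) := by
  set M := univ.sup' univ_nonempty fun i => P i / Q i
  have hle_M : ∀ i, P i / Q i ≤ M := fun i => le_sup' (fun i => P i / Q i) (mem_univ i)
  have hsum : ∑ i, P i = ∑ i, Q i := hP1.trans hQ1.symm
  obtain ⟨j, hj⟩ : ∃ j, Q j < P j := by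
    by_contra! h
    exact hne (funext fun i => (sum_eq_sum_iff_of_le fun i _ => h i).1 hsum i (mem_univ i))
  have hQj : 0 < Q j := (hQ0 j).lt_of_ne fun h => by linarith [(hac j).2 h.symm]
  have hM : 1 < M := ((one_lt_div hQj).2 hj).trans_le (hle_M j)
  have hac' : ∀ i, Q i = 0 → P i = 0 := fun i => (hac i).2
  rw [exp_log (zero_lt_one.trans hM), sum_mul_log_div_eq_sum_mul_klFun hsum hac',
    sum_mul_log_div_eq_sum_mul_revKlFun hsum hac', mul_sum]
  refine sum_le_sum fun i _ => ?_
  rcases (hQ0 i).eq_or_lt with hQi | hQi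
  · simp [← hQi]
  have hPi : 0 < P i := (hP0 i).lt_of_ne fun h => by linarith [(hac i).1 h.symm]
  calc Q i * klFun (P i / Q i) ≤ Q i * (kappa M * revKlFun (P i / Q i)) :=
        mul_le_mul_of_nonneg_left
          (klFun_le_kappa_mul_revKlFun hM (div_pos hPi hQi) (hle_M i)) hQi.le
    _ = kappa M * (Q i * revKlFun (P i / Q i)) := mul_left_comm _ _ _
end
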